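/- Let Y_S, Y_Q ∈ R^{m+1} be compressed features with respect to the map p, and let A(Y_S, Y_Q) be the set of all pairs (x̃_S, x̃_Q) of vectors in R^n such that Y(x̃_S) = Y_S and Y(x̃_Q) = Y_Q. If A(Y_S, Y_Q) is nonempty, then ‖Y_S − Y_Q‖ = min over (x̃_S, x̃_Q) ∈ A(Y_S, Y_Q) of ‖x̃_S − x̃_Q‖; i.e., the compressed-feature distance equals the minimum possible original distance consistent with the compressed features. -/

import Mathlib

noncomputable section
open Matrix

/-- Projection map p(v) = Pᵀ(v − c). -/
noncomputable def proj {n m : ℕ} (P : Matrix (Fin n) (Fin m) ℝ)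
    (c v : EuclideanSpace ℝ (Fin n)) : EuclideanSpace ℝ (Fin m) :=
  Matrix.toEuclideanLin Pᵀ (v - c)

/-- Generalized inverse q(z) = Pz + c. -/
noncomputable def qinv {n m : ℕ} (P : Matrix (Fin n) (Fin m) ℝ)
    (c : EuclideanSpace ℝ (Fin n)) (z : EuclideanSpace ℝ (Fin m)) :
    EuclideanSpace ℝ (Fin n) :=
  Matrix.toEuclideanLin P z + c

/-- Projection distance δ(v) = ‖v − q(p(v))‖. -/
noncomputable def pdist {n m : ℕ} (P : Matrix (Fin n) (Fin m) ℝ)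
    (c v : EuclideanSpace ℝ (Fin n)) : ℝ :=
  ‖v - qinv P c (proj P c v)‖


/-- Compressed feature Y(v) = (p(v), δ(v)) with the ℓ² product norm. -/
noncomputable def compFeat {n m : ℕ} (P : Matrix (Fin n) (Fin m) ℝ)
    (c v : EuclideanSpace ℝ (Fin n)) : WithLp 2 (EuclideanSpace ℝ (Fin m) × ℝ) :=
  (WithLp.equiv 2 _).symm (proj P c v, pdist P c v)

/-!
Write `v - c = P p(v) + r(v)` with residual `r(v) = v - q(p(v))`, so that `Pᵀ r(v) = 0` and
`δ(v) = ‖r(v)‖`. Since `range P ⟂ ker Pᵀ` and `P` is an isometry,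
`‖v - w‖² = ‖p(v) - p(w)‖² + ‖r(v) - r(w)‖²`, and the reverse triangle inequality
`|δ(v) - δ(w)| ≤ ‖r(v) - r(w)‖` shows `‖Y(v) - Y(w)‖ ≤ ‖v - w‖`. Equality holds when both
residuals are nonnegative multiples of one unit vector of `ker Pᵀ`, a kernel that is
nontrivial because `m < n`.
-/

section OrthonormalColumns

variable {ι κ : Type*} [Fintype ι] [DecidableEq ι] [Fintype κ] [DecidableEq κ]
  {P : Matrix ι κ ℝ}

theorem Matrix.inner_toEuclideanLin_left (z : EuclideanSpace ℝ κ)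
    (w : EuclideanSpace ℝ ι) :
    inner ℝ (toEuclideanLin P z) w = inner ℝ z (toEuclideanLin Pᵀ w) := by
  rw [← conjTranspose_eq_transpose_of_trivial, toEuclideanLin_conjTranspose_eq_adjoint,
    LinearMap.adjoint_inner_right]

theorem Matrix.toEuclideanLin_transpose_toEuclideanLin (hP : Pᵀ * P = 1)
    (z : EuclideanSpace ℝ κ) : toEuclideanLin Pᵀ (toEuclideanLin P z) = z := by
  simp [toLpLin_apply, mulVec_mulVec, hP]

theorem Matrix.norm_toEuclideanLin_add_sq (hP : Pᵀ * P = 1) (z : EuclideanSpace ℝ κ)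
    {s : EuclideanSpace ℝ ι} (hs : toEuclideanLin Pᵀ s = 0) :
    ‖toEuclideanLin P z + s‖ ^ 2 = ‖z‖ ^ 2 + ‖s‖ ^ 2 := by
  rw [norm_add_sq_real, inner_toEuclideanLin_left, hs, inner_zero_right,
    ← real_inner_self_eq_norm_sq (toEuclideanLin P z), inner_toEuclideanLin_left,
    toEuclideanLin_transpose_toEuclideanLin hP, real_inner_self_eq_norm_sq]
  ring

end OrthonormalColumns

theorem Matrix.exists_norm_eq_one_toEuclideanLin_transpose_eq_zero {ι κ : Type*} [Fintype ι]
    [DecidableEq ι] [Fintype κ] (h : Fintype.card κ < Fintype.card ι) (P : Matrix ι κ ℝ) :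
    ∃ u : EuclideanSpace ℝ ι, ‖u‖ = 1 ∧ toEuclideanLin Pᵀ u = 0 := by
  obtain ⟨v, hv, hv0⟩ := Submodule.exists_mem_ne_zero_of_ne_bot <|
    LinearMap.ker_ne_bot_of_finrank_lt (f := toEuclideanLin Pᵀ) (by simpa using h)
  exact ⟨(‖v‖⁻¹ : ℝ) • v, norm_smul_inv_norm hv0, by rw [map_smul, hv, smul_zero]⟩

section Compressed

variable {n m : ℕ} {P : Matrix (Fin n) (Fin m) ℝ} {c : EuclideanSpace ℝ (Fin n)}

def projResidual (P : Matrix (Fin n) (Fin m) ℝ) (c v : EuclideanSpace ℝ (Fin n)) :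
    EuclideanSpace ℝ (Fin n) :=
  v - qinv P c (proj P c v)

theorem pdist_eq_norm_projResidual (v : EuclideanSpace ℝ (Fin n)) :
    pdist P c v = ‖projResidual P c v‖ :=
  rfl

theorem sub_eq_toEuclideanLin_proj_add_projResidual (v : EuclideanSpace ℝ (Fin n)) :
    v - c = toEuclideanLin P (proj P c v) + projResidual P c v := by
  simp only [projResidual, qinv]
  abel

theorem toEuclideanLin_transpose_projResidual (hP : Pᵀ * P = 1)
    (v : EuclideanSpace ℝ (Fin n)) :
    toEuclideanLin Pᵀ (projResidual P c v) = 0 := by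
  have h := congrArg (toEuclideanLin Pᵀ)
    (sub_eq_toEuclideanLin_proj_add_projResidual (P := P) (c := c) v)
  rwa [map_add, toEuclideanLin_transpose_toEuclideanLin hP, ← proj, left_eq_add] at h

theorem proj_qinv_add (hP : Pᵀ * P = 1) (z : EuclideanSpace ℝ (Fin m))
    {s : EuclideanSpace ℝ (Fin n)} (hs : toEuclideanLin Pᵀ s = 0) :
    proj P c (qinv P c z + s) = z := by
  rw [proj, qinv, add_right_comm, add_sub_cancel_right, map_add,
    toEuclideanLin_transpose_toEuclideanLin hP, hs, add_zero]

theorem projResidual_qinv_add (hP : Pᵀ * P = 1) (z : EuclideanSpace ℝ (Fin m))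
    {s : EuclideanSpace ℝ (Fin n)} (hs : toEuclideanLin Pᵀ s = 0) :
    projResidual P c (qinv P c z + s) = s := by
  rw [projResidual, proj_qinv_add hP z hs, add_sub_cancel_left]

theorem norm_sub_sq_eq_proj_add_projResidual (hP : Pᵀ * P = 1)
    (v w : EuclideanSpace ℝ (Fin n)) :
    ‖v - w‖ ^ 2 =
      ‖proj P c v - proj P c w‖ ^ 2 + ‖projResidual P c v - projResidual P c w‖ ^ 2 := by
  have hvw : v - w = toEuclideanLin P (proj P c v - proj P c w) +
      (projResidual P c v - projResidual P c w) := by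
    rw [map_sub, ← sub_sub_sub_cancel_right v w c,
      sub_eq_toEuclideanLin_proj_add_projResidual (P := P) (c := c) v,
      sub_eq_toEuclideanLin_proj_add_projResidual (P := P) (c := c) w]
    abel
  rw [hvw, norm_toEuclideanLin_add_sq hP _ (by
    rw [map_sub, toEuclideanLin_transpose_projResidual hP,
      toEuclideanLin_transpose_projResidual hP, sub_zero])]

theorem norm_compFeat_sub_sq (v w : EuclideanSpace ℝ (Fin n)) :
    ‖compFeat P c v - compFeat P c w‖ ^ 2 =
      ‖proj P c v - proj P c w‖ ^ 2 + (pdist P c v - pdist P c w) ^ 2 := by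
  exact (WithLp.prod_norm_sq_eq_of_L2 _).trans (by rw [Real.norm_eq_abs, sq_abs]; rfl)

theorem norm_compFeat_sub_le (hP : Pᵀ * P = 1) (v w : EuclideanSpace ℝ (Fin n)) :
    ‖compFeat P c v - compFeat P c w‖ ≤ ‖v - w‖ := by
  have hδ : |pdist P c v - pdist P c w| ≤ ‖projResidual P c v - projResidual P c w‖ :=
    abs_norm_sub_norm_le _ _
  refine pow_le_pow_iff_left₀ (norm_nonneg _) (norm_nonneg _) two_ne_zero |>.mp ?_
  rw [norm_compFeat_sub_sq, norm_sub_sq_eq_proj_add_projResidual hP, ← sq_abs (_ - _)]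
  gcongr

theorem exists_compFeat_eq_norm_sub_eq (hmn : m < n) (hP : Pᵀ * P = 1)
    (zS zQ : EuclideanSpace ℝ (Fin m)) {δS δQ : ℝ} (hδS : 0 ≤ δS) (hδQ : 0 ≤ δQ) :
    ∃ v w : EuclideanSpace ℝ (Fin n),
      proj P c v = zS ∧ pdist P c v = δS ∧ proj P c w = zQ ∧ pdist P c w = δQ ∧
      ‖v - w‖ = ‖compFeat P c v - compFeat P c w‖ := by
  obtain ⟨u, hu, hPu⟩ :=
    exists_norm_eq_one_toEuclideanLin_transpose_eq_zero (by simpa using hmn) P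
  have hPδu (δ : ℝ) : toEuclideanLin Pᵀ (δ • u) = 0 := by rw [map_smul, hPu, smul_zero]
  have hres (z : EuclideanSpace ℝ (Fin m)) (δ : ℝ) :
      projResidual P c (qinv P c z + δ • u) = δ • u := projResidual_qinv_add hP z (hPδu δ)
  refine ⟨qinv P c zS + δS • u, qinv P c zQ + δQ • u, proj_qinv_add hP zS (hPδu δS), ?_,
    proj_qinv_add hP zQ (hPδu δQ), ?_, ?_⟩
  · rw [pdist_eq_norm_projResidual, hres, norm_smul, hu, mul_one, Real.norm_of_nonneg hδS]
  · rw [pdist_eq_norm_projResidual, hres, norm_smul, hu, mul_one, Real.norm_of_nonneg hδQ]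
  · refine (pow_left_inj₀ (norm_nonneg _) (norm_nonneg _) two_ne_zero).mp ?_
    rw [norm_sub_sq_eq_proj_add_projResidual hP, norm_compFeat_sub_sq, pdist_eq_norm_projResidual,
      pdist_eq_norm_projResidual, hres, hres, ← sub_smul, norm_smul, norm_smul, norm_smul, hu,
      mul_one, mul_one, mul_one, Real.norm_of_nonneg hδS, Real.norm_of_nonneg hδQ,
      Real.norm_eq_abs, sq_abs]

end Compressed

theorem compressed_distance_is_min_general {n m : ℕ} (hmn : m < n)
    (P : Matrix (Fin n) (Fin m) ℝ) (hP : Pᵀ * P = 1)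
    (c : EuclideanSpace ℝ (Fin n))
    (zS zQ : EuclideanSpace ℝ (Fin m)) (δS δQ : ℝ) (hδS : 0 ≤ δS) (hδQ : 0 ≤ δQ) :
    IsLeast ((fun w : EuclideanSpace ℝ (Fin n) × EuclideanSpace ℝ (Fin n) =>
        ‖w.1 - w.2‖) ''
      {w | proj P c w.1 = zS ∧ pdist P c w.1 = δS ∧
           proj P c w.2 = zQ ∧ pdist P c w.2 = δQ})
      ‖((WithLp.equiv 2 (EuclideanSpace ℝ (Fin m) × ℝ)).symm (zS, δS)) -
        ((WithLp.equiv 2 (EuclideanSpace ℝ (Fin m) × ℝ)).symm (zQ, δQ))‖ := by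
  constructor
  · obtain ⟨v, w, hv₁, hv₂, hw₁, hw₂, hvw⟩ :=
      exists_compFeat_eq_norm_sub_eq (c := c) hmn hP zS zQ hδS hδQ
    refine ⟨(v, w), ⟨hv₁, hv₂, hw₁, hw₂⟩, ?_⟩
    simpa only [compFeat, hv₁, hv₂, hw₁, hw₂] using hvw
  · rintro _ ⟨⟨v, w⟩, ⟨hv₁, hv₂, hw₁, hw₂⟩, rfl⟩
    simpa only [compFeat, hv₁, hv₂, hw₁, hw₂] using norm_compFeat_sub_le (c := c) hP v w

/-- The compressed-feature distance is the minimum original distance among all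
pairs of vectors consistent with the given compressed features. -/
theorem compressed_distance_is_min {n m : ℕ} (hmn : m < n)
    (P : Matrix (Fin n) (Fin m) ℝ) (hP : Pᵀ * P = 1)
    (c : EuclideanSpace ℝ (Fin n))
    (zS zQ : EuclideanSpace ℝ (Fin m)) (δS δQ : ℝ) (hδS : 0 ≤ δS) (hδQ : 0 ≤ δQ)
    (hne : {w : EuclideanSpace ℝ (Fin n) × EuclideanSpace ℝ (Fin n) |
        proj P c w.1 = zS ∧ pdist P c w.1 = δS ∧
        proj P c w.2 = zQ ∧ pdist P c w.2 = δQ}.Nonempty) :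
    IsLeast ((fun w : EuclideanSpace ℝ (Fin n) × EuclideanSpace ℝ (Fin n) =>
        ‖w.1 - w.2‖) ''
      {w | proj P c w.1 = zS ∧ pdist P c w.1 = δS ∧
           proj P c w.2 = zQ ∧ pdist P c w.2 = δQ})
      ‖((WithLp.equiv 2 (EuclideanSpace ℝ (Fin m) × ℝ)).symm (zS, δS)) -
        ((WithLp.equiv 2 (EuclideanSpace ℝ (Fin m) × ℝ)).symm (zQ, δQ))‖ :=
  compressed_distance_is_min_general hmn P hP c zS zQ δS δQ hδS hδQ
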